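/- Let k be an algebraically closed field, f_1,...,f_m algebraically independent polynomials in k[t_1,...,t_n], and g ∈ k[t_1,...,t_n] a polynomial determined by (f_1,...,f_m). Let D := {(f_1(a),...,f_m(a),g(a)) : a ∈ k^n} ⊆ k^{m+1}. Then the Zariski-closure of D has dimension m. -/

import Mathlib

open MvPolynomial
/-!
If `f, g` were algebraically independent, then inside an algebraically closed field `Ω ⊇ k[t]`
there would be a `k`-embedding `σ : Ω → Ω` fixing every `fᵢ` and sending `g` to `g + 1`.
By the Nullstellensatz, "`f(a) = f(b)` implies `g(a) = g(b)` on `k`-points" says that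
`g(x) - g(y)` lies in the radical of the ideal generated by the `fᵢ(x) - fᵢ(y)`, so it also holds
at the `Ω`-points `t` and `σ t`, forcing `g = g + 1`. Hence `(f, g)` satisfy a nonzero polynomial
relation, which vanishes on `D`. Conversely, a polynomial in the first `m` coordinates vanishing
on `D` is a relation among the `fᵢ`, so it is zero.
-/


/-- `p` vanishes at every point of `A`. -/
def VanishesOn {k : Type*} [CommSemiring k] {m : ℕ} (A : Set (Fin m → k))
    (p : MvPolynomial (Fin m) k) : Prop :=
  ∀ a ∈ A, eval a p = 0

/-- The Zariski closure of `A ⊆ k^m` has dimension at most `d` (with `dim ∅ = -1`):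
for every index set `S` with more than `d` elements, the vanishing ideal of `A`
contains a nonzero polynomial supported on the variables in `S`. -/
def ZClosureDimLE {k : Type*} [CommSemiring k] {m : ℕ} (A : Set (Fin m → k)) (d : ℤ) : Prop :=
  ∀ S : Finset (Fin m), d < (S.card : ℤ) →
    ∃ p : MvPolynomial (Fin m) k, p ≠ 0 ∧
      p ∈ MvPolynomial.supported k (↑S : Set (Fin m)) ∧ VanishesOn A p

/-- The range of the polynomial map `k^n → k^m` induced by `f`. -/
def polyRange {k : Type*} [CommSemiring k] {m n : ℕ}
    (f : Fin m → MvPolynomial (Fin n) k) : Set (Fin m → k) :=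
  Set.range fun a : Fin n → k => fun i => eval a (f i)

/-- `f` is almost surjective on `k`: the Zariski closure of the complement of the range
of the induced map `k^n → k^m` has dimension at most `m - 2`. -/
def AlmostSurj {k : Type*} [CommSemiring k] {m n : ℕ}
    (f : Fin m → MvPolynomial (Fin n) k) : Prop :=
  ZClosureDimLE (polyRange f)ᶜ ((m : ℤ) - 2)

/-- `g` is determined by `f`. -/
def Determined {k : Type*} [CommSemiring k] {m n : ℕ}
    (f : Fin m → MvPolynomial (Fin n) k) (g : MvPolynomial (Fin n) k) : Prop :=
  ∀ a b : Fin n → k, (∀ i, eval a (f i) = eval b (f i)) → eval a g = eval b g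

section Embeddings

variable {F Ω ι : Type*} [Field F] [Field Ω] [IsAlgClosed Ω] [Algebra F Ω]

theorem IsTranscendenceBasis.exists_algHom_comp_eq {x x' : ι → Ω}
    (hx : IsTranscendenceBasis F x) (hx' : AlgebraicIndependent F x') :
    ∃ σ : Ω →ₐ[F] Ω, σ ∘ x = x' := by
  have := hx.isAlgebraic_field
  let φ : IntermediateField.adjoin F (Set.range x) →ₐ[F] Ω :=
    (IsFractionRing.liftAlgHom (algebraicIndependent_iff_injective_aeval.1 hx')).comp
      hx.1.reprField
  obtain ⟨σ, hσ⟩ := IsAlgClosed.surjective_domRestrict_of_isAlgebraic (E := Ω) φ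
  refine ⟨σ, funext fun i => ?_⟩
  have hxL : x i ∈ IntermediateField.adjoin F (Set.range x) :=
    IntermediateField.subset_adjoin F _ (Set.mem_range_self i)
  have hxi : hx.1.aevalEquivField (algebraMap _ _ (X i : MvPolynomial ι F)) = ⟨x i, hxL⟩ := by
    ext; simp
  calc σ (x i) = σ.domRestrict (IntermediateField.adjoin F (Set.range x)) ⟨x i, hxL⟩ := rfl
    _ = φ ⟨x i, hxL⟩ := DFunLike.congr_fun hσ _
    _ = x' i := by
      rw [← hxi]
      simp only [φ, AlgebraicIndependent.reprField, AlgHom.comp_apply]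
      rw [AlgEquiv.coe_toAlgHom, AlgEquiv.symm_apply_apply, IsFractionRing.liftAlgHom_apply,
        IsFractionRing.lift_algebraMap]
      exact aeval_X x' i

theorem AlgebraicIndependent.exists_algHom_shift {y : ι → Ω} (hy : AlgebraicIndependent F y)
    (i₀ : ι) : ∃ σ : Ω →ₐ[F] Ω, (∀ i ≠ i₀, σ (y i) = y i) ∧ σ (y i₀) = y i₀ + 1 := by
  classical
  obtain ⟨t, hyt, ht⟩ := exists_isTranscendenceBasis_superset hy.coe_range
  let c : t → F := fun j => if (j : Ω) = y i₀ then 1 else 0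
  have hshift : AlgebraicIndependent F fun j : t => (j : Ω) + algebraMap F Ω (c j) := by
    have htr (j : t) : Transcendental F (Polynomial.X + Polynomial.C (c j)) :=
      Polynomial.transcendental _ (by rw [Polynomial.natDegree_X_add_C]; norm_num)
        (by rw [Polynomial.leadingCoeff_X_add_C]; exact one_mem _)
    convert ht.1.polynomial_aeval_of_transcendental htr using 2 with j
    simp
  obtain ⟨σ, hσ⟩ := ht.exists_algHom_comp_eq hshift
  have hσy (i : ι) : σ (y i) = y i + algebraMap F Ω (c ⟨y i, hyt (Set.mem_range_self i)⟩) :=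
    congr_fun hσ ⟨y i, _⟩
  refine ⟨σ, fun i hi => ?_, ?_⟩
  · simp [hσy, c, hy.injective.ne hi]
  · simp [hσy, c]

end Embeddings

theorem Determined.algHom_eq {k A : Type*} [Field k] [IsAlgClosed k] [CommRing A] [IsReduced A]
    [Algebra k A] {m n : ℕ} {f : Fin m → MvPolynomial (Fin n) k} {g : MvPolynomial (Fin n) k}
    (hg : Determined f g) (τ₁ τ₂ : MvPolynomial (Fin n) k →ₐ[k] A)
    (hf : ∀ i, τ₁ (f i) = τ₂ (f i)) : τ₁ g = τ₂ g := by
  let diff (p : MvPolynomial (Fin n) k) : MvPolynomial (Fin n ⊕ Fin n) k :=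
    rename Sum.inl p - rename Sum.inr p
  have hrad : diff g ∈ (Ideal.span (Set.range fun i => diff (f i))).radical := by
    rw [← vanishingIdeal_zeroLocus_eq_radical (K := k), mem_vanishingIdeal_iff]
    intro x hx
    rw [mem_zeroLocus_iff] at hx
    have hxf (i : Fin m) : eval (x ∘ Sum.inl) (f i) = eval (x ∘ Sum.inr) (f i) := by
      simpa [diff, eval_rename, sub_eq_zero] using hx _ (Ideal.subset_span ⟨i, rfl⟩)
    simpa [diff, eval_rename, sub_eq_zero] using hg _ _ hxf
  let Ψ : MvPolynomial (Fin n ⊕ Fin n) k →ₐ[k] A := aeval (Sum.elim (τ₁ ∘ X) (τ₂ ∘ X))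
  have hΨ (p : MvPolynomial (Fin n) k) : Ψ (diff p) = τ₁ p - τ₂ p := by
    simp only [Ψ, diff, map_sub, aeval_rename, Sum.elim_comp_inl, Sum.elim_comp_inr,
      ← aeval_unique]
  have hker : Ideal.span (Set.range fun i => diff (f i)) ≤ RingHom.ker Ψ :=
    Ideal.span_le.2 <| Set.range_subset_iff.2 fun i => by simp [hΨ, hf]
  obtain ⟨N, hN⟩ := hrad
  have hnil : (τ₁ g - τ₂ g) ^ N = 0 := by
    rw [← hΨ, ← map_pow]
    exact hker hN
  exact sub_eq_zero.1 (IsReduced.eq_zero _ ⟨N, hnil⟩)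

theorem Determined.not_algebraicIndependent_snoc {k : Type*} [Field k] [IsAlgClosed k] {m n : ℕ}
    {f : Fin m → MvPolynomial (Fin n) k} {g : MvPolynomial (Fin n) k} (hg : Determined f g) :
    ¬ AlgebraicIndependent k (Fin.snoc f g : Fin (m + 1) → MvPolynomial (Fin n) k) := by
  intro hind
  let K := FractionRing (MvPolynomial (Fin n) k)
  let Ω := AlgebraicClosure K
  let φ : MvPolynomial (Fin n) k →ₐ[k] Ω := IsScalarTower.toAlgHom k _ Ω
  have hφ : Function.Injective φ := by
    change Function.Injective (algebraMap _ Ω)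
    rw [IsScalarTower.algebraMap_eq _ K Ω]
    exact (algebraMap K Ω).injective.comp (IsFractionRing.injective _ K)
  obtain ⟨σ, hσf, hσg⟩ := (hind.map' hφ).exists_algHom_shift (Fin.last m)
  have hfix : φ g = σ (φ g) := hg.algHom_eq φ (σ.comp φ) fun i => by
    simpa using (hσf i.castSucc (Fin.castSucc_ne_last i)).symm
  simp only [Function.comp_apply, Fin.snoc_last] at hσg
  simp [← hfix] at hσg

theorem eval_aeval {R σ ι : Type*} [CommSemiring R] (a : σ → R) (u : ι → MvPolynomial σ R)
    (p : MvPolynomial ι R) : eval a (aeval u p) = eval (fun i => eval a (u i)) p := by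
  simp only [← coe_aeval_eq_eval]
  exact comp_aeval_apply u (aeval a) p

theorem vanishesOn_polyRange_iff {k : Type*} [CommRing k] [IsDomain k] [Infinite k] {m n : ℕ}
    (u : Fin m → MvPolynomial (Fin n) k) (p : MvPolynomial (Fin m) k) :
    VanishesOn (polyRange u) p ↔ aeval u p = 0 := by
  simp only [VanishesOn, polyRange, Set.forall_mem_range, MvPolynomial.funext_iff, eval_aeval,
    map_zero]

theorem polyRange_snoc {k : Type*} [CommSemiring k] {m n : ℕ} (f : Fin m → MvPolynomial (Fin n) k)
    (g : MvPolynomial (Fin n) k) :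
    polyRange (Fin.snoc f g : Fin (m + 1) → MvPolynomial (Fin n) k) =
      Set.range fun a => Fin.snoc (fun i => eval a (f i)) (eval a g) := by
  simp only [polyRange]
  congr 1
  funext a
  exact Fin.comp_snoc (eval a) f g

theorem zClosureDimLE_sub_one_iff {k : Type*} [CommSemiring k] {m : ℕ} (A : Set (Fin m → k)) :
    ZClosureDimLE A ((m : ℤ) - 1) ↔ ∃ p : MvPolynomial (Fin m) k, p ≠ 0 ∧ VanishesOn A p := by
  constructor
  · intro h
    obtain ⟨p, hp, -, hA⟩ := h Finset.univ (by simp)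
    exact ⟨p, hp, hA⟩
  · rintro ⟨p, hp, hA⟩ S hS
    have hSuniv : S = Finset.univ :=
      Finset.eq_univ_of_card _ (le_antisymm S.card_le_univ (by simp; omega))
    exact ⟨p, hp, by simp [hSuniv, supported_univ], hA⟩

theorem zClosureDimLE_polyRange_iff {k : Type*} [CommRing k] [IsDomain k] [Infinite k] {m n : ℕ}
    (u : Fin m → MvPolynomial (Fin n) k) :
    ZClosureDimLE (polyRange u) ((m : ℤ) - 1) ↔ ¬ AlgebraicIndependent k u := by
  simp [zClosureDimLE_sub_one_iff, vanishesOn_polyRange_iff, algebraicIndependent_iff, and_comm]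

theorem not_zClosureDimLE_polyRange {k ι : Type*} [CommRing k] [IsDomain k] [Infinite k]
    [Fintype ι] {m n : ℕ} {u : Fin m → MvPolynomial (Fin n) k} {e : ι → Fin m}
    (he : Function.Injective e) (hu : AlgebraicIndependent k (u ∘ e)) :
    ¬ ZClosureDimLE (polyRange u) ((Fintype.card ι : ℤ) - 1) := by
  classical
  intro h
  obtain ⟨p, hp, hpS, hpA⟩ := h (Finset.univ.map ⟨e, he⟩) (by simp)
  obtain ⟨q, rfl⟩ :=
    exists_rename_eq_of_vars_subset_range p e he (by simpa [mem_supported] using hpS)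
  rw [vanishesOn_polyRange_iff, aeval_rename] at hpA
  exact hp (by rw [algebraicIndependent_iff.1 hu q hpA, map_zero])

theorem stmt10 {k : Type*} [Field k] [IsAlgClosed k] {m n : ℕ}
    (f : Fin m → MvPolynomial (Fin n) k) (hind : AlgebraicIndependent k f)
    (g : MvPolynomial (Fin n) k) (hg : Determined f g)
    (D : Set (Fin (m + 1) → k))
    (hD : D = Set.range fun a : Fin n → k =>
      Fin.snoc (fun i => eval a (f i)) (eval a g)) :
    ZClosureDimLE D (m : ℤ) ∧ ¬ ZClosureDimLE D ((m : ℤ) - 1) := by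
  rw [hD, ← polyRange_snoc]
  constructor
  · simpa using (zClosureDimLE_polyRange_iff _).2 hg.not_algebraicIndependent_snoc
  · simpa using not_zClosureDimLE_polyRange (Fin.castSucc_injective m)
      (by rwa [Fin.snoc_comp_castSucc])
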